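/- For any bi-infinite sequence (a_i) ∈ {1,2,3}^ℤ containing the pattern a_{−2}a_{−1}a_0a_1a_2 = 1 3 3* 1 1, one has λ₀((a_i)) = [3; 3, 1, a_{−3}, …] + [0; 1, 1, a_3, …] < 3.9228. -/

import Mathlib

/-!
Odd convergents of a continued fraction with partial quotients `≥ 1` decrease, so the value is at
most `[a₀; a₁, …, a₉] = [a₀; a₁, a₂, t]`, where `t` is the sixth convergent of the tail
`[a₃; a₄, …]`. Iterating `x ↦ d + 1/x` (`1 ≤ d ≤ 3`) on intervals, starting from `[1, 4]`, gives
`[5/4, 4]`, `[5/4, 19/5]`, `[24/19, 19/5]`, `[24/19, 91/24]`, `[115/91, 91/24]`, so `t ≥ 115/91`.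
Since `[a₀; a₁, a₂, t]` increases with `1/t`, the two sides are at most
`[3; 3, 1, 115/91] = 3 + 206/733` and `[0; 1, 1, 115/91] = 206/321`, and their sum is below `3.9228`.
-/

/-- Continued fraction numerators: `(cfP a n).1 = pₙ`, `(cfP a n).2 = pₙ₋₁`,
with `p₋₁ = 1`, `p₀ = a₀`, `pₙ₊₁ = aₙ₊₁ pₙ + pₙ₋₁`. -/
noncomputable def cfP (a : ℕ → ℝ) : ℕ → ℝ × ℝ
  | 0 => (a 0, 1)
  | n + 1 => (a (n + 1) * (cfP a n).1 + (cfP a n).2, (cfP a n).1)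

/-- Continued fraction denominators: `(cfQ a n).1 = qₙ`, `(cfQ a n).2 = qₙ₋₁`,
with `q₋₁ = 0`, `q₀ = 1`, `qₙ₊₁ = aₙ₊₁ qₙ + qₙ₋₁`. -/
noncomputable def cfQ (a : ℕ → ℝ) : ℕ → ℝ × ℝ
  | 0 => (1, 0)
  | n + 1 => (a (n + 1) * (cfQ a n).1 + (cfQ a n).2, (cfQ a n).1)

/-- The `n`-th convergent `[a₀; a₁, …, aₙ] = pₙ/qₙ` of the continued fraction with
partial quotients `a`. -/
noncomputable def cfConv (a : ℕ → ℝ) (n : ℕ) : ℝ := (cfP a n).1 / (cfQ a n).1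

/-- `x` is the value of the infinite continued fraction `[a₀; a₁, a₂, …]`, i.e. the limit
of its convergents. -/
def IsCFVal (a : ℕ → ℝ) (x : ℝ) : Prop :=
  Filter.Tendsto (cfConv a) Filter.atTop (nhds x)

open Set

section Recurrence

variable (a : ℕ → ℝ)

lemma cfQ_pos (h : ∀ k, 1 ≤ a (k + 1)) (n : ℕ) : 0 < (cfQ a n).1 ∧ 0 ≤ (cfQ a n).2 := by
  induction n with
  | zero => simp [cfQ]
  | succ n ih =>
    simp only [cfQ]
    exact ⟨by nlinarith [h n, ih.1, ih.2], ih.1.le⟩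

lemma cfP_mul_cfQ_sub (n : ℕ) :
    (cfP a n).1 * (cfQ a n).2 - (cfP a n).2 * (cfQ a n).1 = (-1) ^ (n + 1) := by
  induction n with
  | zero => simp [cfP, cfQ]
  | succ n ih =>
    simp only [cfP, cfQ]
    linear_combination (-1 : ℝ) * ih

lemma cfConv_add_two_sub (h : ∀ k, 1 ≤ a (k + 1)) (n : ℕ) :
    cfConv a (n + 2) - cfConv a n = (-1) ^ n * a (n + 2) / ((cfQ a (n + 2)).1 * (cfQ a n).1) := by
  have hdet := cfP_mul_cfQ_sub a (n + 1)
  rw [cfConv, cfConv, div_sub_div _ _ (cfQ_pos a h _).1.ne' (cfQ_pos a h _).1.ne']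
  simp only [cfP, cfQ] at hdet ⊢
  congr 1
  linear_combination a (n + 2) * hdet

lemma cfConv_add_two_le_of_odd (h : ∀ k, 1 ≤ a (k + 1)) {n : ℕ} (hn : Odd n) :
    cfConv a (n + 2) ≤ cfConv a n := by
  have hsub := cfConv_add_two_sub a h n
  rw [hn.neg_one_pow, neg_one_mul, neg_div] at hsub
  have := div_nonneg (zero_le_one.trans (h (n + 1)))
    (mul_pos (cfQ_pos a h (n + 2)).1 (cfQ_pos a h n).1).le
  linarith

lemma antitone_cfConv_odd (h : ∀ k, 1 ≤ a (k + 1)) : Antitone fun k => cfConv a (2 * k + 1) :=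
  antitone_nat_of_succ_le fun k => by
    simpa only [mul_add, add_right_comm] using cfConv_add_two_le_of_odd a h (odd_two_mul_add_one k)

lemma IsCFVal.le_cfConv_odd {x : ℝ} (hx : IsCFVal a x) (h : ∀ k, 1 ≤ a (k + 1)) (k : ℕ) :
    x ≤ cfConv a (2 * k + 1) :=
  (antitone_cfConv_odd a h).le_of_tendsto
    (hx.comp (Filter.tendsto_atTop_mono (fun k => show k ≤ 2 * k + 1 by omega) Filter.tendsto_id)) k

end Recurrence

section Shift

variable (a : ℕ → ℝ)

lemma cfP_succ_and_cfQ_succ (n : ℕ) :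
    cfP a (n + 1) = a 0 • cfP (fun k => a (k + 1)) n + cfQ (fun k => a (k + 1)) n ∧
      cfQ a (n + 1) = cfP (fun k => a (k + 1)) n := by
  induction n with
  | zero => simp [cfP, cfQ, mul_comm]
  | succ n ih =>
    rw [cfP.eq_2 a, cfQ.eq_2 a, ih.1, ih.2, cfP.eq_2, cfQ.eq_2]
    simp only [Prod.ext_iff, Prod.fst_add, Prod.snd_add, Prod.smul_fst, Prod.smul_snd, smul_eq_mul]
    exact ⟨⟨by ring, trivial⟩, trivial⟩

lemma cfConv_succ (h : ∀ k, 1 ≤ a (k + 1)) (n : ℕ) :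
    cfConv a (n + 1) = a 0 + (cfConv (fun k => a (k + 1)) n)⁻¹ := by
  obtain ⟨hP, hQ⟩ := cfP_succ_and_cfQ_succ a n
  have hpos : 0 < (cfP (fun k => a (k + 1)) n).1 := hQ ▸ (cfQ_pos a h (n + 1)).1
  have hQ' : 0 < (cfQ (fun k => a (k + 1)) n).1 := (cfQ_pos _ (fun k => h (k + 1)) n).1
  rw [cfConv, cfConv, hP, hQ]
  simp only [Prod.fst_add, Prod.smul_fst, smul_eq_mul, inv_div]
  field_simp

lemma cfConv_add_three (h : ∀ k, 1 ≤ a (k + 1)) (n : ℕ) :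
    cfConv a (n + 3) = a 0 + (a 1 + (a 2 + (cfConv (fun k => a (k + 3)) n)⁻¹)⁻¹)⁻¹ := by
  rw [cfConv_succ a h, cfConv_succ _ (fun k => h (k + 1)), cfConv_succ _ (fun k => h (k + 2))]

end Shift

section Bounds

lemma cfConv_mem_Icc_one_four (a : ℕ → ℝ) (h : ∀ k, a k ∈ Icc 1 3) (n : ℕ) :
    cfConv a n ∈ Icc 1 4 := by
  induction n generalizing a with
  | zero =>
    simp only [cfConv, cfP, cfQ, div_one]
    exact Icc_subset_Icc_right (by norm_num) (h 0)
  | succ n ih =>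
    rw [cfConv_succ a (fun k => (h (k + 1)).1)]
    obtain ⟨hl, hu⟩ := ih _ (fun k => h (k + 1))
    have : (cfConv (fun k => a (k + 1)) n)⁻¹ ≤ 1 := inv_le_one_of_one_le₀ hl
    have : 0 < (cfConv (fun k => a (k + 1)) n)⁻¹ := by positivity
    constructor <;> linarith [(h 0).1, (h 0).2]

lemma cfConv_mem_Icc_of_forall_cfConv_mem_Icc {m M m' M' : ℝ} {j : ℕ} (hm : 0 < m)
    (hm' : m' ≤ 1 + M⁻¹) (hM' : 3 + m⁻¹ ≤ M')
    (H : ∀ a : ℕ → ℝ, (∀ k, a k ∈ Icc 1 3) → ∀ n, j ≤ n → cfConv a n ∈ Icc m M)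
    (a : ℕ → ℝ) (h : ∀ k, a k ∈ Icc 1 3) {n : ℕ} (hn : j + 1 ≤ n) :
    cfConv a n ∈ Icc m' M' := by
  obtain ⟨n, rfl⟩ : ∃ n', n = n' + 1 := ⟨n - 1, by omega⟩
  rw [cfConv_succ a (fun k => (h (k + 1)).1)]
  obtain ⟨hl, hu⟩ := H _ (fun k => h (k + 1)) n (by omega)
  have := inv_anti₀ hm hl
  have := inv_anti₀ (hm.trans_le hl) hu
  constructor <;> linarith [(h 0).1, (h 0).2]

lemma le_cfConv_of_five_le (a : ℕ → ℝ) (h : ∀ k, a k ∈ Icc 1 3) {n : ℕ} (hn : 5 ≤ n) :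
    115 / 91 ≤ cfConv a n := by
  have B₁ := cfConv_mem_Icc_of_forall_cfConv_mem_Icc (m' := 5 / 4) (M' := 4) (j := 0)
    (by norm_num) (by norm_num) (by norm_num) (fun a h n _ => cfConv_mem_Icc_one_four a h n)
  have B₂ := cfConv_mem_Icc_of_forall_cfConv_mem_Icc (m' := 5 / 4) (M' := 19 / 5)
    (by norm_num) (by norm_num) (by norm_num) B₁
  have B₃ := cfConv_mem_Icc_of_forall_cfConv_mem_Icc (m' := 24 / 19) (M' := 19 / 5)
    (by norm_num) (by norm_num) (by norm_num) B₂
  have B₄ := cfConv_mem_Icc_of_forall_cfConv_mem_Icc (m' := 24 / 19) (M' := 91 / 24)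
    (by norm_num) (by norm_num) (by norm_num) B₃
  exact (cfConv_mem_Icc_of_forall_cfConv_mem_Icc (m' := 115 / 91) (M' := 91 / 24)
    (by norm_num) (by norm_num) (by norm_num) B₄ a h hn).1

end Bounds

lemma IsCFVal.le_of_tail_mem_Icc {a : ℕ → ℝ} {x : ℝ} (hx : IsCFVal a x)
    (h : ∀ k, 1 ≤ a (k + 1)) (htail : ∀ k, a (k + 3) ∈ Icc 1 3) :
    x ≤ a 0 + (a 1 + (a 2 + 91 / 115)⁻¹)⁻¹ := by
  have ht := le_cfConv_of_five_le _ htail (n := 6) (by norm_num)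
  have h₁ := h 0
  have h₂ := h 1
  calc x ≤ cfConv a 9 := hx.le_cfConv_odd a h 4
    _ = a 0 + (a 1 + (a 2 + (cfConv (fun k => a (k + 3)) 6)⁻¹)⁻¹)⁻¹ := cfConv_add_three a h 6
    _ ≤ a 0 + (a 1 + (a 2 + 91 / 115)⁻¹)⁻¹ := by
      gcongr
      exact (inv_anti₀ (by norm_num) ht).trans_eq (by norm_num)

/-- For any bi-infinite sequence with digits in `{1,2,3}` containing the pattern `1 3 3* 1 1`, one has `λ₀ = [3; 3, 1, a₋₃, …] + [0; 1, 1, a₃, …] < 3.9228`. -/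
theorem stmt_15 (a : ℤ → ℕ) (hdig : ∀ i, 1 ≤ a i ∧ a i ≤ 3)
    (hm2 : a (-2) = 1) (hm1 : a (-1) = 3) (h0 : a 0 = 3) (h1 : a 1 = 1) (h2 : a 2 = 1)
    (ℓL ℓR : ℝ)
    (hL : IsCFVal (fun k => (a (-(k : ℤ)) : ℝ)) ℓL)
    (hR : IsCFVal (fun k => if k = 0 then 0 else (a k : ℝ)) ℓR) :
    ℓL + ℓR < 3.9228 := by
  have hdig' (i : ℤ) : (a i : ℝ) ∈ Icc 1 3 := by
    rw [mem_Icc]; exact_mod_cast hdig i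
  have hLle := hL.le_of_tail_mem_Icc (fun k => (hdig' _).1) (fun k => hdig' _)
  have hRle := hR.le_of_tail_mem_Icc (fun k => by simpa using (hdig' _).1)
    (fun k => by simpa using hdig' _)
  norm_num [hm2, hm1, h0, h1, h2] at hLle hRle
  linarith
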